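/- arXiv:1111.0071 — 7 statements merged into one kernel-verified Lean document; each statement's English description precedes it below -/
import Mathlib

section
/- Let B > 0 and let p¹, p² ∈ ℝ². For every T > 0 and every continuously differentiable curve γ : [0,T] → ℝ² with γ(0) = p¹ and γ(T) = p², the control energy satisfies ∫₀^T ‖γ'(t) − (B,0)‖² dt ≥ 2B(d_{p¹p²} + x_{p¹} − x_{p²}). -/
/-!
Write `u = γ' - (B,0)` and `Δ = p² - p¹`. By the fundamental theorem of calculus
`∫₀ᵀ u = Δ - T (B,0)`, so Cauchy–Schwarz gives `T · ∫₀ᵀ ‖u‖² ≥ ‖Δ - T (B,0)‖²`.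
Expanding, `‖Δ - T F‖² = (‖Δ‖ - T ‖F‖)² + 2T (‖F‖ ‖Δ‖ - ⟪Δ, F⟫)`, and with `F = (B,0)` the
last bracket is `B (d_{p¹p²} + x_{p¹} - x_{p²})`; divide by `T > 0`.
-/

open scoped RealInnerProductSpace

noncomputable abbrev Pt := EuclideanSpace ℝ (Fin 2)

/-- The constant flow field with velocity `(B, 0)`. -/
noncomputable def flow (B : ℝ) : Pt := WithLp.toLp 2 (fun i => if i = 0 then B else 0 : Fin 2 → ℝ)

open MeasureTheory intervalIntegral Set

section CauchySchwarz

variable {E : Type*} [NormedAddCommGroup E] [InnerProductSpace ℝ E] [CompleteSpace E]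
  {u : ℝ → E} {a b : ℝ}

theorem two_inner_integral_sub_le_integral_norm_sq (hab : a ≤ b)
    (hu : IntervalIntegrable u volume a b)
    (hu2 : IntervalIntegrable (fun t => ‖u t‖ ^ 2) volume a b) (w : E) :
    2 * ⟪w, ∫ t in a..b, u t⟫ - (b - a) * ‖w‖ ^ 2 ≤ ∫ t in a..b, ‖u t‖ ^ 2 := by
  have hinner : IntervalIntegrable (fun t => ⟪w, u t⟫) volume a b :=
    ⟨hu.1.const_inner w, hu.2.const_inner w⟩
  have hpoint : ∀ t ∈ Icc a b, 2 * ⟪w, u t⟫ - ‖w‖ ^ 2 ≤ ‖u t‖ ^ 2 := fun t _ => by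
    nlinarith [norm_sub_sq_real (u t) w, sq_nonneg ‖u t - w‖, real_inner_comm w (u t)]
  calc 2 * ⟪w, ∫ t in a..b, u t⟫ - (b - a) * ‖w‖ ^ 2
      = ∫ t in a..b, (2 * ⟪w, u t⟫ - ‖w‖ ^ 2) := by
        rw [integral_sub (hinner.const_mul 2) intervalIntegrable_const,
          intervalIntegral.integral_const_mul, intervalIntegral.integral_const, smul_eq_mul,
          ← innerSL_apply_apply ℝ, ← (innerSL ℝ w).intervalIntegral_comp_comm hu]
        simp only [innerSL_apply_apply]
    _ ≤ ∫ t in a..b, ‖u t‖ ^ 2 :=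
        integral_mono_on hab ((hinner.const_mul 2).sub intervalIntegrable_const) hu2 hpoint

theorem norm_intervalIntegral_sq_le (hab : a ≤ b)
    (hu : IntervalIntegrable u volume a b)
    (hu2 : IntervalIntegrable (fun t => ‖u t‖ ^ 2) volume a b) :
    ‖∫ t in a..b, u t‖ ^ 2 ≤ (b - a) * ∫ t in a..b, ‖u t‖ ^ 2 := by
  rcases hab.eq_or_lt with rfl | hlt
  · simp
  have hba : 0 < b - a := sub_pos.2 hlt
  have h := two_inner_integral_sub_le_integral_norm_sq hab hu hu2
    ((b - a)⁻¹ • ∫ t in a..b, u t)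
  rw [real_inner_smul_left, real_inner_self_eq_norm_sq, norm_smul, Real.norm_eq_abs,
    abs_of_pos (inv_pos.2 hba)] at h
  field_simp at h
  linarith

end CauchySchwarz

theorem mul_two_mul_norm_mul_norm_sub_inner_le {E : Type*} [NormedAddCommGroup E]
    [InnerProductSpace ℝ E] (T : ℝ) (v F : E) :
    T * (2 * (‖F‖ * ‖v‖ - ⟪v, F⟫)) ≤ ‖v - T • F‖ ^ 2 := by
  rw [norm_sub_sq_real, real_inner_smul_right, norm_smul, Real.norm_eq_abs, mul_pow, sq_abs]
  nlinarith [sq_nonneg (‖v‖ - T * ‖F‖)]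

theorem norm_flow (B : ℝ) : ‖flow B‖ = |B| := by
  simp [flow, EuclideanSpace.norm_eq, Real.sqrt_sq_eq_abs]

theorem inner_flow (B : ℝ) (v : Pt) : ⟪v, flow B⟫ = B * v 0 := by
  simp [flow, PiLp.inner_apply]

/-- for every `T > 0` and every continuously differentiable curve
`γ : [0,T] → ℝ²` with `γ 0 = p¹` and `γ T = p²`, the control energy
`∫₀ᵀ ‖γ'(t) - (B,0)‖² dt` is at least `2B(d_{p¹p²} + x_{p¹} - x_{p²})`. -/
theorem energy_lower_bound
    (B : ℝ) (hB : 0 < B) (p1 p2 : Pt) (T : ℝ) (hT : 0 < T)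
    (γ : ℝ → Pt) (hγ : ContDiffOn ℝ 1 γ (Set.Icc 0 T))
    (h0 : γ 0 = p1) (hTf : γ T = p2) :
    2 * B * (dist p1 p2 + p1 0 - p2 0) ≤
      ∫ t in (0 : ℝ)..T, ‖derivWithin γ (Set.Icc 0 T) t - flow B‖ ^ 2 := by
  set u := fun t => derivWithin γ (Icc 0 T) t - flow B
  have hγ' : ContinuousOn (derivWithin γ (Icc 0 T)) (Icc 0 T) :=
    hγ.continuousOn_derivWithin (uniqueDiffOn_Icc hT) le_rfl
  have hu : ContinuousOn u (uIcc 0 T) := by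
    rw [uIcc_of_le hT.le]; exact hγ'.sub continuousOn_const
  have hint : ∫ t in (0 : ℝ)..T, u t = (p2 - p1) - T • flow B := by
    rw [integral_sub (hγ'.intervalIntegrable_of_Icc hT.le) intervalIntegrable_const,
      integral_derivWithin_Icc_of_contDiffOn_Icc hγ hT.le, intervalIntegral.integral_const,
      sub_zero, h0, hTf]
  refine le_of_mul_le_mul_left ?_ hT
  calc T * (2 * B * (dist p1 p2 + p1 0 - p2 0))
      = T * (2 * (‖flow B‖ * ‖p2 - p1‖ - ⟪p2 - p1, flow B⟫)) := by
        rw [norm_flow, abs_of_pos hB, inner_flow, dist_comm, dist_eq_norm, PiLp.sub_apply]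
        ring
    _ ≤ ‖(p2 - p1) - T • flow B‖ ^ 2 := mul_two_mul_norm_mul_norm_sub_inner_le _ _ _
    _ ≤ T * ∫ t in (0 : ℝ)..T, ‖u t‖ ^ 2 := by
        simpa [hint] using norm_intervalIntegral_sq_le hT.le hu.intervalIntegrable
          (hu.norm.pow 2).intervalIntegrable
end

section
/- Let p¹, p² ∈ ℝ² satisfy x_{p¹} < x_{p²} and y_{p¹} < y_{p²}. With a = (x_{p²} − x_{p¹})/2, b = (y_{p²} − y_{p¹})/2, and the transformed coordinates x'_p, y'_p defined from p¹, p², a point p ∈ ℝ² satisfies d_{p¹p} − d_{p²p} = x_{p²} − x_{p¹} if and only if (x'_p)²/a² − (y'_p)²/b² = 1 and x'_p ≥ a. That is, the energy-based Voronoi boundary between p¹ and p² is the branch of a hyperbola with foci p¹, p² in the rotated/translated frame. -/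
open Real

section Hyperbola

variable {a b c : ℝ}

lemma sq_mul_sq_dist_focus (habc : c ^ 2 = a ^ 2 + b ^ 2) (x y : ℝ) :
    a ^ 2 * ((x + c) ^ 2 + y ^ 2) =
      (c * x + a ^ 2) ^ 2 + (a ^ 2 * y ^ 2 + a ^ 2 * b ^ 2 - b ^ 2 * x ^ 2) := by
  linear_combination (a ^ 2 - x ^ 2) * habc

lemma mul_dist_focus_eq_abs_of_hyperbola (ha : 0 ≤ a) (habc : c ^ 2 = a ^ 2 + b ^ 2) {x y : ℝ}
    (hxy : b ^ 2 * x ^ 2 - a ^ 2 * y ^ 2 = a ^ 2 * b ^ 2) :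
    a * √((x + c) ^ 2 + y ^ 2) = |c * x + a ^ 2| := by
  have h : (c * x + a ^ 2) ^ 2 = a ^ 2 * ((x + c) ^ 2 + y ^ 2) := by
    rw [sq_mul_sq_dist_focus habc]; linarith
  rw [← sqrt_sq_eq_abs, h, sqrt_mul (sq_nonneg a), sqrt_sq ha]

lemma div_sq_sub_div_sq_eq_one_iff (ha : a ≠ 0) (hb : b ≠ 0) (x y : ℝ) :
    x ^ 2 / a ^ 2 - y ^ 2 / b ^ 2 = 1 ↔ b ^ 2 * x ^ 2 - a ^ 2 * y ^ 2 = a ^ 2 * b ^ 2 := by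
  rw [div_sub_div _ _ (pow_ne_zero 2 ha) (pow_ne_zero 2 hb), div_eq_one_iff_eq (by positivity)]
  constructor <;> intro h <;> linear_combination h

theorem sqrt_sub_sqrt_eq_iff_hyperbola_branch (ha : 0 < a) (hb : b ≠ 0) (hc : 0 < c)
    (habc : c ^ 2 = a ^ 2 + b ^ 2) (x y : ℝ) :
    √((x + c) ^ 2 + y ^ 2) - √((x - c) ^ 2 + y ^ 2) = 2 * a ↔
      x ^ 2 / a ^ 2 - y ^ 2 / b ^ 2 = 1 ∧ a ≤ x := by
  have hac : a < c := by nlinarith [pow_pos (abs_pos.2 hb) 2, sq_abs b]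
  have habc' : (-c) ^ 2 = a ^ 2 + b ^ 2 := by rw [neg_sq, habc]
  rw [div_sq_sub_div_sq_eq_one_iff ha.ne' hb]
  constructor
  · intro h
    have hd₁ := sq_sqrt (by positivity : 0 ≤ (x + c) ^ 2 + y ^ 2)
    have hd₂ := sq_sqrt (by positivity : 0 ≤ (x - c) ^ 2 + y ^ 2)
    have hmul : a * √((x - c) ^ 2 + y ^ 2) = c * x - a ^ 2 := by
      linear_combination (hd₁ - hd₂) / 4 -
        (√((x + c) ^ 2 + y ^ 2) + √((x - c) ^ 2 + y ^ 2) + 2 * a) / 4 * h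
    have hcx : a ^ 2 ≤ c * x := by nlinarith [sqrt_nonneg ((x - c) ^ 2 + y ^ 2)]
    have hxy : b ^ 2 * x ^ 2 - a ^ 2 * y ^ 2 = a ^ 2 * b ^ 2 := by
      have h₂ := sq_mul_sq_dist_focus habc' x y
      rw [← sub_eq_add_neg, ← hd₂] at h₂
      linear_combination h₂ - (a * √((x - c) ^ 2 + y ^ 2) + c * x - a ^ 2) * hmul
    refine ⟨hxy, (abs_le_of_sq_le_sq' ?_ (by nlinarith)).2⟩
    nlinarith [sq_nonneg y, sq_nonneg a]
  · rintro ⟨hxy, hx⟩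
    have hcx : a ^ 2 ≤ c * x := by nlinarith
    have h₁ := mul_dist_focus_eq_abs_of_hyperbola ha.le habc hxy
    have h₂ := mul_dist_focus_eq_abs_of_hyperbola ha.le habc' hxy
    rw [abs_of_nonneg (by linarith [sq_nonneg a])] at h₁
    rw [← sub_eq_add_neg, abs_of_nonpos (by linarith)] at h₂
    refine mul_left_cancel₀ ha.ne' ?_
    linear_combination h₁ - h₂

end Hyperbola

lemma EuclideanSpace.dist_eq_sqrt_fin_two (p q : EuclideanSpace ℝ (Fin 2)) :
    dist p q = √((p 0 - q 0) ^ 2 + (p 1 - q 1) ^ 2) := by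
  simp [EuclideanSpace.dist_eq, Fin.sum_univ_two, Real.dist_eq, sq_abs]

lemma EuclideanSpace.dist_eq_sqrt_rotate (q p : EuclideanSpace ℝ (Fin 2)) {m₀ m₁ c cs sn : ℝ}
    (h : cs ^ 2 + sn ^ 2 = 1) (hq₀ : q 0 = m₀ - c * cs) (hq₁ : q 1 = m₁ - c * sn) :
    dist q p = √(((p 0 - m₀) * cs + (p 1 - m₁) * sn + c) ^ 2 +
      (-(p 0 - m₀) * sn + (p 1 - m₁) * cs) ^ 2) := by
  rw [dist_eq_sqrt_fin_two, hq₀, hq₁]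
  congr 1
  linear_combination (c ^ 2 - (p 0 - m₀) ^ 2 - (p 1 - m₁) ^ 2) * h

/-- with `x_{p¹} < x_{p²}` and `y_{p¹} < y_{p²}`, a point `p` satisfies
`d_{p¹p} - d_{p²p} = x_{p²} - x_{p¹}` iff, in the rotated/translated coordinates,
`(x'_p)²/a² - (y'_p)²/b² = 1` with `x'_p ≥ a`: the energy-based Voronoi boundary is a
hyperbola branch with foci `p¹, p²`. -/
theorem boundary_is_hyperbola_branch
    (p1 p2 p : Pt) (hx : p1 0 < p2 0) (hy : p1 1 < p2 1) :
    let a : ℝ := (p2 0 - p1 0) / 2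
    let b : ℝ := (p2 1 - p1 1) / 2
    let cosα : ℝ := (p2 0 - p1 0) / dist p1 p2
    let sinα : ℝ := (p2 1 - p1 1) / dist p1 p2
    let x' : ℝ := (p 0 - (p1 0 + p2 0) / 2) * cosα + (p 1 - (p1 1 + p2 1) / 2) * sinα
    let y' : ℝ := -(p 0 - (p1 0 + p2 0) / 2) * sinα + (p 1 - (p1 1 + p2 1) / 2) * cosα
    (dist p1 p - dist p2 p = p2 0 - p1 0) ↔
      (x' ^ 2 / a ^ 2 - y' ^ 2 / b ^ 2 = 1 ∧ a ≤ x') := by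
  intro a b cosα sinα x' y'
  have hD : dist p1 p2 ^ 2 = (p2 0 - p1 0) ^ 2 + (p2 1 - p1 1) ^ 2 := by
    rw [EuclideanSpace.dist_eq_sqrt_fin_two, sq_sqrt (by positivity)]; ring
  have hDpos : 0 < dist p1 p2 := dist_pos.2 fun h => hx.ne (by rw [h])
  have hunit : cosα ^ 2 + sinα ^ 2 = 1 := by
    simp only [cosα, sinα]; field_simp; exact hD.symm
  have h₁ : dist p1 p = √((x' + dist p1 p2 / 2) ^ 2 + y' ^ 2) :=
    EuclideanSpace.dist_eq_sqrt_rotate p1 p hunit (by simp only [cosα]; field_simp; ring)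
      (by simp only [sinα]; field_simp; ring)
  have h₂ : dist p2 p = √((x' - dist p1 p2 / 2) ^ 2 + y' ^ 2) := by
    rw [sub_eq_add_neg]
    exact EuclideanSpace.dist_eq_sqrt_rotate p2 p hunit (by simp only [cosα]; field_simp; ring)
      (by simp only [sinα]; field_simp; ring)
  rw [h₁, h₂, show p2 0 - p1 0 = 2 * a by simp only [a]; ring]
  exact sqrt_sub_sqrt_eq_iff_hyperbola_branch (by simp only [a]; linarith)
    (by simp only [b]; linarith) (by positivity) (by simp only [a, b]; linear_combination hD / 4)
    x' y'
end

section
/- Let p¹, p² ∈ ℝ² satisfy x_{p¹} < x_{p²} and y_{p¹} = y_{p²}. Then {p ∈ ℝ² : d_{p¹p} + x_{p¹} = d_{p²p} + x_{p²}} = {p ∈ ℝ² : y_p = y_{p²} and x_p ≥ x_{p²}}; that is, the energy-based Voronoi boundary between p¹ and p² is the half line starting at p² in the positive x direction. -/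
lemma dist_eq_abs_sub_of_apply_one_eq {p q : Pt} (h : p 1 = q 1) :
    dist p q = |p 0 - q 0| := by
  rw [EuclideanSpace.dist_eq, Fin.sum_univ_two, h, dist_self, Real.dist_eq]
  simp [Real.sqrt_sq_eq_abs]

lemma sameRay_iff_of_apply_one_eq_zero {v w : Pt} (hv₁ : v 1 = 0) (hv₀ : 0 < v 0) :
    SameRay ℝ v w ↔ w 1 = 0 ∧ 0 ≤ w 0 := by
  have hv : v ≠ 0 := fun h => hv₀.ne' (by simp [h])
  rw [← exists_nonneg_left_iff_sameRay hv]
  constructor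
  · rintro ⟨r, hr, rfl⟩
    simp only [PiLp.smul_apply, smul_eq_mul, hv₁, mul_zero, true_and]
    positivity
  · rintro ⟨hw₁, hw₀⟩
    refine ⟨w 0 / v 0, by positivity, ?_⟩
    ext i
    fin_cases i
    · simp [hv₀.ne']
    · simp [hv₁, hw₁]

/-- if `x_{p¹} < x_{p²}` and `y_{p¹} = y_{p²}`, the energy-based Voronoi
boundary between `p¹` and `p²` is the half line starting at `p²` in the positive `x`
direction. -/
theorem horizontal_generators_halfline
    (p1 p2 : Pt) (hx : p1 0 < p2 0) (hy : p1 1 = p2 1) :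
    {p : Pt | dist p1 p + p1 0 = dist p2 p + p2 0} =
      {p : Pt | p 1 = p2 1 ∧ p2 0 ≤ p 0} := by
  ext p
  have hd : dist p1 p2 = p2 0 - p1 0 := by
    rw [dist_eq_abs_sub_of_apply_one_eq hy, abs_of_neg (by linarith), neg_sub]
  calc dist p1 p + p1 0 = dist p2 p + p2 0 ↔ dist p1 p2 + dist p2 p = dist p1 p := by
        rw [hd]; constructor <;> intro h <;> linarith
    _ ↔ Wbtw ℝ p1 p2 p := dist_add_dist_eq_iff
    _ ↔ SameRay ℝ (p2 -ᵥ p1) (p -ᵥ p2) := wbtw_iff_sameRay_vsub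
    _ ↔ (p -ᵥ p2) 1 = 0 ∧ 0 ≤ (p -ᵥ p2) 0 :=
        sameRay_iff_of_apply_one_eq_zero (by simp [hy]) (by simpa using hx)
    _ ↔ p 1 = p2 1 ∧ p2 0 ≤ p 0 := by
        simp only [vsub_eq_sub, PiLp.sub_apply, sub_eq_zero, sub_nonneg]
end

section
/- Let p¹ ≠ p² be points of ℝ², a = (x_{p²} − x_{p¹})/2, c = d_{p¹p²}/2, and p* = p¹ + ((c+a)/(2c))(p² − p¹). Then: (i) d_{p¹p*} = c + a and d_{p²p*} = c − a; (ii) p* lies on the energy-based Voronoi boundary, i.e., d_{p¹p*} + x_{p¹} = d_{p²p*} + x_{p²}; (iii) p* is the unique closest boundary point to each generator: every p ≠ p* with d_{p¹p} + x_{p¹} = d_{p²p} + x_{p²} satisfies d_{p²p} > c − a and d_{p¹p} > c + a. -/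
/-!
The boundary condition says `d(p¹, p) - d(p², p) = x_{p²} - x_{p¹}`, so the boundary is one branch
of a hyperbola with foci `p¹`, `p²`, and `p*` is its vertex: the point of the segment `[p¹, p²]`
with this difference of distances. Along the branch the sum `d(p¹, p) + d(p², p)` is at least
`d(p¹, p²)`, with equality only on the segment, i.e. only at `p*`; with the difference fixed,
both distances are therefore strictly larger away from `p*`.
-/

section StrictConvex

variable {E P : Type*} [NormedAddCommGroup E] [NormedSpace ℝ E] [StrictConvexSpace ℝ E]
  [MetricSpace P] [NormedAddTorsor E P]

theorem eq_of_wbtw_of_dist_add_dist_eq_of_dist_sub_dist_eq {x z p q : P} (hq : Wbtw ℝ x q z)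
    (hsum : dist x p + dist p z = dist x z) (hdiff : dist x p - dist z p = dist x q - dist z q) :
    p = q := by
  obtain ⟨r, ⟨hr0, hr1⟩, rfl⟩ := hq
  have hxq : dist x (AffineMap.lineMap x z r) = r * dist x z := by
    rw [dist_left_lineMap, Real.norm_of_nonneg hr0]
  have hqz : dist z (AffineMap.lineMap x z r) = (1 - r) * dist x z := by
    rw [dist_comm, dist_lineMap_right, Real.norm_of_nonneg (sub_nonneg.mpr hr1)]
  rw [dist_comm z p, hxq, hqz] at hdiff
  exact eq_lineMap_of_dist_eq_mul_of_dist_eq_mul (by linarith) (by linarith)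

theorem dist_lt_dist_of_wbtw_of_dist_sub_dist_eq {x z p q : P} (hq : Wbtw ℝ x q z)
    (hpq : p ≠ q) (hdiff : dist x p - dist z p = dist x q - dist z q) :
    dist x q < dist x p ∧ dist z q < dist z p := by
  have hq_sum : dist x q + dist q z = dist x z := hq.dist_add_dist
  have hp_sum : dist x z < dist x p + dist p z :=
    (dist_triangle x p z).lt_of_ne fun h ↦
      hpq (eq_of_wbtw_of_dist_add_dist_eq_of_dist_sub_dist_eq hq h.symm hdiff)
  rw [dist_comm q z] at hq_sum
  rw [dist_comm p z] at hp_sum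
  constructor <;> linarith

end StrictConvex

theorem abs_sub_apply_le_dist {ι : Type*} [Fintype ι] (x y : EuclideanSpace ℝ ι) (i : ι) :
    |y i - x i| ≤ dist x y := by
  rw [abs_sub_comm, ← Real.dist_eq]
  exact PiLp.dist_apply_le x y i

/-- with `a = (x_{p²} - x_{p¹})/2`, `c = d_{p¹p²}/2`, the point
`p* = p¹ + ((c+a)/(2c))(p² - p¹)` satisfies `d_{p¹p*} = c + a`, `d_{p²p*} = c - a`, lies
on the energy-based Voronoi boundary, and is the unique closest boundary point to each
generator. -/
theorem closest_boundary_point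
    (p1 p2 : Pt) (hne : p1 ≠ p2) :
    let a : ℝ := (p2 0 - p1 0) / 2
    let c : ℝ := dist p1 p2 / 2
    let pstar : Pt := p1 + ((c + a) / (2 * c)) • (p2 - p1)
    dist p1 pstar = c + a ∧ dist p2 pstar = c - a ∧
      dist p1 pstar + p1 0 = dist p2 pstar + p2 0 ∧
      ∀ p : Pt, p ≠ pstar → dist p1 p + p1 0 = dist p2 p + p2 0 →
        c - a < dist p2 p ∧ c + a < dist p1 p := by
  intro a c pstar
  have hc : 0 < c := half_pos (dist_pos.mpr hne)
  have ha : |a| ≤ c := by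
    rw [abs_div, abs_two]
    exact div_le_div_of_nonneg_right (abs_sub_apply_le_dist p1 p2 0) zero_le_two
  obtain ⟨ha_lower, ha_upper⟩ := abs_le.mp ha
  set r := (c + a) / (2 * c)
  have hr0 : 0 ≤ r := div_nonneg (by linarith) (by linarith)
  have hr1 : r ≤ 1 := (div_le_one (by linarith)).mpr (by linarith)
  have hpstar : pstar = AffineMap.lineMap p1 p2 r := by
    rw [AffineMap.lineMap_apply_module', add_comm]
  have hdist : dist p1 p2 = 2 * c := by ring
  have hr : r * (2 * c) = c + a := div_mul_cancel₀ _ (by positivity)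
  have h1 : dist p1 pstar = c + a := by
    rw [hpstar, dist_left_lineMap, Real.norm_of_nonneg hr0, hdist, hr]
  have h2 : dist p2 pstar = c - a := by
    rw [hpstar, dist_comm, dist_lineMap_right, Real.norm_of_nonneg (sub_nonneg.mpr hr1), hdist]
    linarith
  have hx : p2 0 - p1 0 = 2 * a := by ring
  have hwbtw : Wbtw ℝ p1 pstar p2 := ⟨r, ⟨hr0, hr1⟩, hpstar.symm⟩
  refine ⟨h1, h2, by linarith, fun p hp hbd ↦ ?_⟩
  have := dist_lt_dist_of_wbtw_of_dist_sub_dist_eq hwbtw hp (by linarith)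
  rw [h1, h2] at this
  exact this.symm
end

section
/- Let p¹, p² ∈ ℝ² satisfy x_{p¹} < x_{p²} and y_{p¹} < y_{p²}, and let a = (x_{p²} − x_{p¹})/2, b = (y_{p²} − y_{p¹})/2 with transformed coordinates x'_p, y'_p defined from p¹, p². Every p ∈ ℝ² with d_{p¹p} + x_{p¹} ≤ d_{p²p} + x_{p²} satisfies x'_p ≤ (a/b)|y'_p| + a; that is, the energy-based Voronoi cell of p¹ with respect to p² is contained in the asymptote-based region D_upper(p¹|p²) bounded by the lines through the vertex parallel to the asymptotes. -/
lemma dist_sq_eq_fin_two (p q : EuclideanSpace ℝ (Fin 2)) :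
    dist p q ^ 2 = (p 0 - q 0) ^ 2 + (p 1 - q 1) ^ 2 := by
  simp only [EuclideanSpace.dist_sq_eq, Fin.sum_univ_two, Real.dist_eq, sq_abs]

/-- Shifting by `t` along the unit vector `(cs, sn)` shifts only the first rotated coordinate. -/
lemma sq_add_sq_shift_eq_rotated {u v t cs sn : ℝ} (h : cs ^ 2 + sn ^ 2 = 1) :
    (u + t * cs) ^ 2 + (v + t * sn) ^ 2 = (u * cs + v * sn + t) ^ 2 + (-u * sn + v * cs) ^ 2 := by
  linear_combination (t ^ 2 - u ^ 2 - v ^ 2) * h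

lemma lt_and_mul_sq_lt_of_div_mul_abs_add_lt {a b x y : ℝ} (ha : 0 ≤ a) (hb : 0 < b)
    (h : a / b * |y| + a < x) : a < x ∧ a ^ 2 * y ^ 2 < b ^ 2 * (x ^ 2 - a ^ 2) := by
  have hcone : a * |y| < b * (x - a) := by
    rw [div_mul_eq_mul_div, div_add' _ _ _ hb.ne', div_lt_iff₀ hb] at h
    linarith
  have hxa : a < x := by nlinarith [abs_nonneg y]
  refine ⟨hxa, ?_⟩
  calc a ^ 2 * y ^ 2 = (a * |y|) ^ 2 := by rw [mul_pow, sq_abs]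
    _ < (b * (x - a)) ^ 2 := by gcongr
    _ ≤ b ^ 2 * (x ^ 2 - a ^ 2) := by nlinarith [sq_nonneg b]

/-- A point inside the right branch of `x²/a² - y²/b² = 1`, with foci `(∓c/2, 0)` at distances
`d₁, d₂`, has `d₁ - d₂ > 2a`. -/
lemma add_lt_of_inside_hyperbola {a b c x y d₁ d₂ : ℝ} (ha : 0 < a) (hc : 0 ≤ c)
    (hc2 : c ^ 2 = 4 * a ^ 2 + 4 * b ^ 2) (hd₁ : 0 ≤ d₁)
    (hd₁2 : d₁ ^ 2 = (x + c / 2) ^ 2 + y ^ 2) (hd₂2 : d₂ ^ 2 = (x - c / 2) ^ 2 + y ^ 2)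
    (hxa : a < x) (hxy : a ^ 2 * y ^ 2 < b ^ 2 * (x ^ 2 - a ^ 2)) : d₂ + 2 * a < d₁ := by
  have h2a : 2 * a ≤ c := by nlinarith [sq_nonneg b]
  have hpos : 0 < c * x - 2 * a ^ 2 := by nlinarith
  have hsq : (2 * a * d₂) ^ 2 < (c * x - 2 * a ^ 2) ^ 2 := by
    linear_combination 4 * hxy + 4 * a ^ 2 * hd₂2 - (x ^ 2 - a ^ 2) * hc2
  have hlin : 2 * a * d₂ < c * x - 2 * a ^ 2 := lt_of_pow_lt_pow_left₀ 2 hpos.le hsq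
  refine lt_of_pow_lt_pow_left₀ 2 hd₁ ?_
  linear_combination 2 * hlin + hd₂2 - hd₁2

/-- every point `p` in the energy-based Voronoi cell of `p¹` with respect
to `p²` satisfies `x'_p ≤ (a/b)|y'_p| + a`, i.e. the cell is contained in the
asymptote-based upper approximation `D_upper(p¹|p²)`. -/
theorem asymptote_upper_approximation
    (p1 p2 p : Pt) (hx : p1 0 < p2 0) (hy : p1 1 < p2 1) :
    let a : ℝ := (p2 0 - p1 0) / 2
    let b : ℝ := (p2 1 - p1 1) / 2
    let cosα : ℝ := (p2 0 - p1 0) / dist p1 p2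
    let sinα : ℝ := (p2 1 - p1 1) / dist p1 p2
    let x' : ℝ := (p 0 - (p1 0 + p2 0) / 2) * cosα + (p 1 - (p1 1 + p2 1) / 2) * sinα
    let y' : ℝ := -(p 0 - (p1 0 + p2 0) / 2) * sinα + (p 1 - (p1 1 + p2 1) / 2) * cosα
    dist p1 p + p1 0 ≤ dist p2 p + p2 0 → x' ≤ (a / b) * |y'| + a := by
  intro a b cosα sinα x' y' hcell
  set c := dist p1 p2
  have hc : 0 < c := dist_pos.mpr fun h ↦ hx.ne (by rw [h])
  have hcos : c * cosα = p2 0 - p1 0 := mul_div_cancel₀ _ hc.ne'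
  have hsin : c * sinα = p2 1 - p1 1 := mul_div_cancel₀ _ hc.ne'
  have hc2 : c ^ 2 = 4 * a ^ 2 + 4 * b ^ 2 := by
    rw [dist_sq_eq_fin_two]; ring
  have hunit : cosα ^ 2 + sinα ^ 2 = 1 := by
    refine mul_left_cancel₀ (pow_ne_zero 2 hc.ne') ?_
    linear_combination (c * cosα + p2 0 - p1 0) * hcos + (c * sinα + p2 1 - p1 1) * hsin - hc2
  have hd₁ : dist p1 p ^ 2 = (x' + c / 2) ^ 2 + y' ^ 2 := by
    rw [dist_comm, dist_sq_eq_fin_two, ← sq_add_sq_shift_eq_rotated hunit]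
    congr 2 <;> linarith
  have hd₂ : dist p2 p ^ 2 = (x' - c / 2) ^ 2 + y' ^ 2 := by
    rw [dist_comm, dist_sq_eq_fin_two, sub_eq_add_neg x', ← sq_add_sq_shift_eq_rotated hunit]
    congr 2 <;> linarith
  by_contra! hout
  obtain ⟨hxa, hxy⟩ := lt_and_mul_sq_lt_of_div_mul_abs_add_lt (by positivity) (by positivity) hout
  have := add_lt_of_inside_hyperbola (by positivity) hc.le hc2 dist_nonneg hd₁ hd₂ hxa hxy
  linarith [show 2 * a = p2 0 - p1 0 by ring]
end

section
/- Let p¹, p² ∈ ℝ² satisfy x_{p¹} < x_{p²} and y_{p¹} < y_{p²}, with a = (x_{p²} − x_{p¹})/2, b = (y_{p²} − y_{p¹})/2, α = arctan((y_{p²} − y_{p¹})/(x_{p²} − x_{p¹})), x̄ = (x_{p¹}+x_{p²})/2, ȳ = (y_{p¹}+y_{p²})/2, and transformed coordinates x'_p, y'_p defined from p¹, p². Then for every p ∈ ℝ²: (i) (y'_p = (b/a)x'_p and y'_p ≥ 0) holds if and only if ((y_p − ȳ)cos 2α = (x_p − x̄)sin 2α and y_p ≥ ȳ); (ii) (y'_p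 = −(b/a)x'_p and y'_p ≤ 0) holds if and only if (y_p = ȳ and x_p ≥ x̄). Thus the two asymptotes of the hyperbolic Voronoi boundary between p¹ and p² pass through the midpoint of p¹p²: one is the horizontal half line in the positive x direction, and the other has slope tan 2α. -/
open Real

lemma cos_arctan_div {x : ℝ} (hx : 0 < x) (y : ℝ) :
    cos (arctan (y / x)) = x / √(x ^ 2 + y ^ 2) := by
  rw [cos_arctan, div_pow, one_add_div (pow_ne_zero 2 hx.ne'), sqrt_div' _ (sq_nonneg x),
    sqrt_sq hx.le, one_div_div]

lemma sin_arctan_div {x : ℝ} (hx : 0 < x) (y : ℝ) :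
    sin (arctan (y / x)) = y / √(x ^ 2 + y ^ 2) := by
  rw [← tan_mul_cos (cos_arctan_pos _).ne', tan_arctan, cos_arctan_div hx]
  field_simp

lemma EuclideanSpace.dist_fin_two (p q : EuclideanSpace ℝ (Fin 2)) :
    dist p q = √((q 0 - p 0) ^ 2 + (q 1 - p 1) ^ 2) := by
  rw [EuclideanSpace.dist_eq, Fin.sum_univ_two, Real.dist_eq, Real.dist_eq, sq_abs, sq_abs,
    ← neg_sub (q 0), ← neg_sub (q 1), neg_sq, neg_sq]

section RotatedLines

variable {α : ℝ} (X Y : ℝ)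

lemma rotated_eq_tan_mul_iff (hc : cos α ≠ 0) :
    -X * sin α + Y * cos α = tan α * (X * cos α + Y * sin α) ↔
      Y * cos (2 * α) = X * sin (2 * α) := by
  have key : cos α * ((-X * sin α + Y * cos α) - tan α * (X * cos α + Y * sin α)) =
      Y * cos (2 * α) - X * sin (2 * α) := by
    rw [tan_eq_sin_div_cos, cos_two_mul', sin_two_mul]
    field_simp
    ring
  rw [← sub_eq_zero, ← mul_eq_zero_iff_left hc, key, sub_eq_zero]

lemma rotated_eq_neg_tan_mul_iff (hc : cos α ≠ 0) :
    -X * sin α + Y * cos α = -tan α * (X * cos α + Y * sin α) ↔ Y = 0 := by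
  have key : cos α * ((-X * sin α + Y * cos α) - -tan α * (X * cos α + Y * sin α)) = Y := by
    rw [tan_eq_sin_div_cos]
    field_simp
    linear_combination Y * cos_sq_add_sin_sq α
  rw [← sub_eq_zero, ← mul_eq_zero_iff_left hc, key]

lemma eq_two_mul_cos_mul_of_mul_cos_two_mul_eq (hs : sin α ≠ 0)
    (h : Y * cos (2 * α) = X * sin (2 * α)) :
    Y = 2 * cos α * (-X * sin α + Y * cos α) := by
  rw [cos_two_mul', sin_two_mul] at h
  refine mul_left_cancel₀ hs ?_
  linear_combination (-sin α) * h - sin α * Y * cos_sq_add_sin_sq α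

lemma rotated_on_tan_ray_iff (hc : 0 < cos α) (hs : 0 < sin α) :
    (-X * sin α + Y * cos α = tan α * (X * cos α + Y * sin α) ∧
        0 ≤ -X * sin α + Y * cos α) ↔
      (Y * cos (2 * α) = X * sin (2 * α) ∧ 0 ≤ Y) := by
  rw [rotated_eq_tan_mul_iff X Y hc.ne']
  refine and_congr_right fun hline => ?_
  rw [iff_comm, ← mul_nonneg_iff_of_pos_left (b := -X * sin α + Y * cos α)
    (show 0 < 2 * cos α by positivity),
    ← eq_two_mul_cos_mul_of_mul_cos_two_mul_eq X Y hs.ne' hline]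

lemma rotated_on_neg_tan_ray_iff (hc : 0 < cos α) (hs : 0 < sin α) :
    (-X * sin α + Y * cos α = -tan α * (X * cos α + Y * sin α) ∧
        -X * sin α + Y * cos α ≤ 0) ↔
      (Y = 0 ∧ 0 ≤ X) := by
  rw [rotated_eq_neg_tan_mul_iff X Y hc.ne']
  refine and_congr_right fun hY => ?_
  rw [hY, zero_mul, add_zero, neg_mul, neg_nonpos, mul_nonneg_iff_of_pos_right hs]

end RotatedLines

/-- in the original coordinates, the two asymptotes of the hyperbolic
Voronoi boundary between `p¹` and `p²` pass through the midpoint of `p¹p²`: the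
asymptote `y' = (b/a)x'`, `y' ≥ 0` is the half line of slope `tan 2α` through the
midpoint with `y ≥ ȳ`, and the asymptote `y' = -(b/a)x'`, `y' ≤ 0` is the horizontal
half line through the midpoint in the positive `x` direction. -/
theorem asymptote_equations
    (p1 p2 : Pt) (hx : p1 0 < p2 0) (hy : p1 1 < p2 1) :
    let a : ℝ := (p2 0 - p1 0) / 2
    let b : ℝ := (p2 1 - p1 1) / 2
    let α : ℝ := Real.arctan ((p2 1 - p1 1) / (p2 0 - p1 0))
    let xbar : ℝ := (p1 0 + p2 0) / 2
    let ybar : ℝ := (p1 1 + p2 1) / 2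
    let cosα : ℝ := (p2 0 - p1 0) / dist p1 p2
    let sinα : ℝ := (p2 1 - p1 1) / dist p1 p2
    ∀ p : Pt,
      let x' : ℝ := (p 0 - xbar) * cosα + (p 1 - ybar) * sinα
      let y' : ℝ := -(p 0 - xbar) * sinα + (p 1 - ybar) * cosα
      ((y' = (b / a) * x' ∧ 0 ≤ y') ↔
        ((p 1 - ybar) * Real.cos (2 * α) = (p 0 - xbar) * Real.sin (2 * α) ∧
          ybar ≤ p 1)) ∧
      ((y' = -(b / a) * x' ∧ y' ≤ 0) ↔ (p 1 = ybar ∧ xbar ≤ p 0)) := by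
  intro a b α xbar ybar cosα sinα p x' y'
  have hdx : 0 < p2 0 - p1 0 := sub_pos.mpr hx
  have hdy : 0 < p2 1 - p1 1 := sub_pos.mpr hy
  have hcos : cosα = cos α := by rw [cos_arctan_div hdx, ← EuclideanSpace.dist_fin_two]
  have hsin : sinα = sin α := by rw [sin_arctan_div hdx, ← EuclideanSpace.dist_fin_two]
  have hba : b / a = tan α := by rw [tan_arctan, div_div_div_cancel_right₀ two_ne_zero]
  have hspos : 0 < sin α := hsin ▸ div_pos hdy (dist_pos.mpr fun h => hx.ne (by rw [h]))
  have hray := rotated_on_tan_ray_iff (p 0 - xbar) (p 1 - ybar) (cos_arctan_pos _) hspos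
  have hnegray :=
    rotated_on_neg_tan_ray_iff (p 0 - xbar) (p 1 - ybar) (cos_arctan_pos _) hspos
  rw [← hcos, ← hsin, ← hba] at hray hnegray
  exact ⟨hray.trans (and_congr_right' sub_nonneg),
    hnegray.trans (and_congr sub_eq_zero sub_nonneg)⟩
end

section
/- Let p¹, p ∈ ℝ² satisfy y_p = y_{p¹} and x_p < x_{p¹}. Then {q ∈ ℝ² : d_{p¹q} + x_{p¹} ≤ d_{pq} + x_p} = {q ∈ ℝ² : y_q = y_{p¹} and x_q ≥ x_{p¹}}; in particular, this degenerate Voronoi cell V(p¹|p) does not depend on the exact location of p (only on y_p = y_{p¹} and x_p < x_{p¹}). -/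
/-!
Since `p` lies on the line through `p¹` parallel to the `x`-axis, to the left of `p¹`, we have
`d_{pp¹} = x_{p¹} - x_p`, so the defining inequality of the cell reads
`d_{pp¹} + d_{p¹q} ≤ d_{pq}`. By strict convexity of the Euclidean norm, this reverse triangle
inequality holds exactly when `p¹` lies on the segment `[p, q]`, i.e. when `q - p¹` is a
nonnegative multiple of the horizontal vector `p¹ - p`.
-/

lemma dist_add_dist_le_iff_wbtw {V P : Type*} [NormedAddCommGroup V] [NormedSpace ℝ V]
    [StrictConvexSpace ℝ V] [MetricSpace P] [NormedAddTorsor V P] {a b c : P} :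
    dist a b + dist b c ≤ dist a c ↔ Wbtw ℝ a b c := by
  rw [← not_lt, dist_lt_dist_add_dist_iff, not_not]

lemma sameRay_iff_of_horizontal {u v : Pt} (hu₁ : u 1 = 0) (hu₀ : 0 < u 0) :
    SameRay ℝ u v ↔ v 1 = 0 ∧ 0 ≤ v 0 := by
  have hu : u ≠ 0 := fun h => hu₀.ne' (by simp [h])
  rw [← exists_nonneg_left_iff_sameRay hu]
  constructor
  · rintro ⟨r, hr, rfl⟩
    simp [hu₁, mul_nonneg hr hu₀.le]
  · rintro ⟨hv₁, hv₀⟩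
    refine ⟨v 0 / u 0, div_nonneg hv₀ hu₀.le, ?_⟩
    ext i
    fin_cases i
    · simp [hu₀.ne']
    · simp [hu₁, hv₁]

lemma dist_of_horizontal {p q : Pt} (hy : p 1 = q 1) (hx : p 0 ≤ q 0) :
    dist p q = q 0 - p 0 := by
  rw [EuclideanSpace.dist_eq, Fin.sum_univ_two, hy, Real.dist_eq, dist_self, sq_abs,
    zero_pow two_ne_zero, add_zero, Real.sqrt_sq_eq_abs, abs_sub_comm, abs_of_nonneg (by linarith)]

/-- if `y_p = y_{p¹}` and `x_p < x_{p¹}`, the degenerate Voronoi cell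
`V(p¹|p)` is the half line starting at `p¹` in the positive `x` direction; in
particular, it does not depend on the exact location of `p`. -/
theorem degenerate_voronoi_cell
    (p1 p : Pt) (hy : p 1 = p1 1) (hx : p 0 < p1 0) :
    {q : Pt | dist p1 q + p1 0 ≤ dist p q + p 0} =
      {q : Pt | q 1 = p1 1 ∧ p1 0 ≤ q 0} := by
  ext q
  have hpp1 : dist p p1 = p1 0 - p 0 := dist_of_horizontal hy hx.le
  calc dist p1 q + p1 0 ≤ dist p q + p 0
      ↔ dist p p1 + dist p1 q ≤ dist p q := by rw [hpp1]; constructor <;> intro <;> linarith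
    _ ↔ Wbtw ℝ p p1 q := dist_add_dist_le_iff_wbtw
    _ ↔ SameRay ℝ (p1 -ᵥ p) (q -ᵥ p1) := wbtw_iff_sameRay_vsub
    _ ↔ (q -ᵥ p1) 1 = 0 ∧ 0 ≤ (q -ᵥ p1) 0 :=
      sameRay_iff_of_horizontal (by simp [hy]) (by simpa using hx)
    _ ↔ q 1 = p1 1 ∧ p1 0 ≤ q 0 := by simp [sub_eq_zero]
end
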